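/- Let G₁, G₂, G_T be commutative groups of exponent p (prime) and e : G₁ → G₂ → G_T bilinear. Let B, h, g₁ ∈ G₁, g₂, w ∈ G₂ and c, x, y, α, r_x, r_y, r_α, r_δ ∈ ZMod p with s_x = c*x + r_x, s_y = c*y + r_y, s_α = -c*α + r_α, s_δ = -c*α*x + r_δ. If e(g₁, g₂) = e(B, w) * e(B, g₂)^x * e(h, w)^{-α} * e(h, g₂)^{y - α·x}, then e(B,g₂)^{r_x} * e(h,w)^{r_α} * e(h,g₂)^{r_y + r_δ} = e(B,g₂)^{s_x} * e(h,w)^{s_α} * e(h,g₂)^{s_y + s_δ} * (e(B,w) * e(g₁,g₂)^{-1})^c. -/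

import Mathlib

/-!
Write `P = e(B, g₂)`, `Q = e(h, w)`, `R = e(h, g₂)`. The credential relation says
`e(B, w) · e(g₁, g₂)⁻¹ = P^(-x) Q^α R^(α x - y)`, so both sides of the claim are products
`P^• Q^• R^•` whose exponents agree in `ZMod p` once the responses `s_•` are expanded;
exponent `p` is what lets `gpow` compute with exponents in `ZMod p`.
-/

def gpow {p : ℕ} {G : Type*} [CommGroup G] (g : G) (a : ZMod p) : G := g ^ a.val

section gpow

variable {p : ℕ} {G : Type*} [CommGroup G] {g : G}

lemma pow_mod_of_pow_eq_one (hg : g ^ p = 1) (n : ℕ) : g ^ (n % p) = g ^ n := by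
  conv_rhs => rw [← Nat.div_add_mod n p, pow_add, pow_mul, hg, one_pow, one_mul]

lemma mul_gpow (g g' : G) (a : ZMod p) : gpow (g * g') a = gpow g a * gpow g' a :=
  mul_pow g g' a.val

lemma gpow_gpow (hg : g ^ p = 1) (a b : ZMod p) : gpow (gpow g a) b = gpow g (a * b) := by
  rw [gpow, gpow, gpow, ← pow_mul, ZMod.val_mul, pow_mod_of_pow_eq_one hg]

variable [NeZero p]

lemma gpow_add (hg : g ^ p = 1) (a b : ZMod p) : gpow g (a + b) = gpow g a * gpow g b := by
  rw [gpow, ZMod.val_add, pow_mod_of_pow_eq_one hg, pow_add, gpow, gpow]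

lemma gpow_neg (hg : g ^ p = 1) (a : ZMod p) : gpow g (-a) = (gpow g a)⁻¹ := by
  refine eq_inv_of_mul_eq_one_left ?_
  rw [← gpow_add hg, neg_add_cancel, gpow, ZMod.val_zero, pow_zero]

end gpow

section triple

variable {p : ℕ} {G : Type*} [CommGroup G] {P Q R : G}

lemma gpow_triple_gpow (hP : P ^ p = 1) (hQ : Q ^ p = 1) (hR : R ^ p = 1)
    (a b d c : ZMod p) :
    gpow (gpow P a * gpow Q b * gpow R d) c = gpow P (a * c) * gpow Q (b * c) * gpow R (d * c) := by
  rw [mul_gpow, mul_gpow, gpow_gpow hP, gpow_gpow hQ, gpow_gpow hR]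

variable [NeZero p] in
lemma gpow_triple_mul (hP : P ^ p = 1) (hQ : Q ^ p = 1) (hR : R ^ p = 1)
    (a b d a' b' d' : ZMod p) :
    gpow P a * gpow Q b * gpow R d * (gpow P a' * gpow Q b' * gpow R d') =
      gpow P (a + a') * gpow Q (b + b') * gpow R (d + d') := by
  rw [gpow_add hP, gpow_add hQ, gpow_add hR]
  ac_rfl

end triple

theorem stmt4_general {p : ℕ} [Fact p.Prime]
    {G₁ G₂ GT : Type*} [CommGroup G₁] [CommGroup G₂] [CommGroup GT]
    (hexpT : ∀ g : GT, g ^ p = 1)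
    (e : G₁ → G₂ → GT)
    (B h g₁ : G₁) (g₂ w : G₂)
    (c x y α rx ry rα rδ sx sy sα sδ : ZMod p)
    (hsx : sx = c * x + rx) (hsy : sy = c * y + ry)
    (hsα : sα = -c * α + rα) (hsδ : sδ = -c * α * x + rδ)
    (hrel : e g₁ g₂ =
      e B w * gpow (e B g₂) x * gpow (e h w) (-α) * gpow (e h g₂) (y - α * x)) :
    gpow (e B g₂) rx * gpow (e h w) rα * gpow (e h g₂) (ry + rδ) =
      gpow (e B g₂) sx * gpow (e h w) sα * gpow (e h g₂) (sy + sδ) *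
        gpow (e B w * (e g₁ g₂)⁻¹) c := by
  set P := e B g₂
  set Q := e h w
  set R := e h g₂
  have hP := hexpT P
  have hQ := hexpT Q
  have hR := hexpT R
  have challenge : e B w * (e g₁ g₂)⁻¹ = gpow P (-x) * gpow Q α * gpow R (-(y - α * x)) := by
    rw [hrel, gpow_neg hP, gpow_neg hR, ← inv_inv (gpow Q α), ← gpow_neg hQ]
    simp only [mul_inv]
    group
  rw [challenge, gpow_triple_gpow hP hQ hR, gpow_triple_mul hP hQ hR, hsx, hsy, hsα, hsδ]
  congr 2
  · congr 1; ring
  · congr 1; ring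
  · ring

/-- Correctness of the R₄ component of AEE group-signature verification. -/
theorem stmt4 {p : ℕ} [Fact p.Prime]
    {G₁ G₂ GT : Type*} [CommGroup G₁] [CommGroup G₂] [CommGroup GT]
    (hexp₁ : ∀ g : G₁, g ^ p = 1) (hexp₂ : ∀ g : G₂, g ^ p = 1)
    (hexpT : ∀ g : GT, g ^ p = 1)
    (e : G₁ → G₂ → GT)
    (hbil : ∀ (g : G₁) (h : G₂) (a b : ZMod p),
      e (gpow g a) (gpow h b) = gpow (e g h) (a * b))
    (hmul₁ : ∀ (g g' : G₁) (h : G₂), e (g * g') h = e g h * e g' h)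
    (hmul₂ : ∀ (g : G₁) (h h' : G₂), e g (h * h') = e g h * e g h')
    (B h g₁ : G₁) (g₂ w : G₂)
    (c x y α rx ry rα rδ sx sy sα sδ : ZMod p)
    (hsx : sx = c * x + rx) (hsy : sy = c * y + ry)
    (hsα : sα = -c * α + rα) (hsδ : sδ = -c * α * x + rδ)
    (hrel : e g₁ g₂ =
      e B w * gpow (e B g₂) x * gpow (e h w) (-α) * gpow (e h g₂) (y - α * x)) :
    gpow (e B g₂) rx * gpow (e h w) rα * gpow (e h g₂) (ry + rδ) =
      gpow (e B g₂) sx * gpow (e h w) sα * gpow (e h g₂) (sy + sδ) *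
        gpow (e B w * (e g₁ g₂)⁻¹) c :=
  stmt4_general hexpT e B h g₁ g₂ w c x y α rx ry rα rδ sx sy sα sδ hsx hsy hsα hsδ hrel
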